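/- arXiv:1401.2819 — 5 statements merged into one kernel-verified Lean document; each statement's English description precedes it below -/
import Mathlib

section
/- For any finite simple graph G, the sum over all vertices of the curvature K(x) = Σ_{k≥0} (-1)^k V_{k-1}(x)/(k+1) equals the Euler characteristic χ(G) = Σ_{k≥0} (-1)^k v_k, where v_k is the number of complete subgraphs K_{k+1} of G (Gauss–Bonnet–Chern theorem for graphs). -/
-- The number of cliques with `m` vertices of `G` that are contained in the
-- vertex set `A` (for `m = 0` this is `1`, counting the empty clique).
open Classical in
noncomputable def numCliquesIn {V : Type*} [Fintype V] (G : SimpleGraph V) (A : Finset V)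
    (m : ℕ) : ℕ :=
  (Finset.univ.powerset.filter (fun s : Finset V => s.card = m ∧ s ⊆ A ∧ G.IsClique ↑s)).card

-- The curvature `K(x) = ∑_{k ≥ 0} (-1)^k V_{k-1}(x) / (k+1)`, where `V_{k-1}(x)` is the
-- number of `K_k` subgraphs of the unit sphere `S(x)` and `V_{-1}(x) = 1`.
open Classical in
noncomputable def curvature {V : Type*} [Fintype V] (G : SimpleGraph V) (x : V) : ℚ :=
  ∑ k ∈ Finset.range (Fintype.card V + 1),
    (-1 : ℚ) ^ k * (numCliquesIn G (Finset.univ.filter (fun y => G.Adj x y)) k : ℚ) / (k + 1)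

/-
The cliques with `k` vertices in the unit sphere `S(x)` correspond, via `s ↦ insert x s`, to the
cliques with `k + 1` vertices containing `x`. Summing over `x` counts every `(k+1)`-clique once per
vertex, so `∑ₓ V_{k-1}(x) = (k + 1) v_k`, which cancels the weight `1 / (k + 1)` in the curvature.
-/

open Finset

theorem Finset.sum_card_filter_mem {α : Type*} [Fintype α] [DecidableEq α]
    (𝒜 : Finset (Finset α)) : ∑ a, #{s ∈ 𝒜 | a ∈ s} = ∑ s ∈ 𝒜, #s := by
  simpa [bipartiteAbove, bipartiteBelow] using
    sum_card_bipartiteAbove_eq_sum_card_bipartiteBelow (s := univ) (t := 𝒜) (· ∈ ·)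

namespace SimpleGraph

variable {V : Type*} [Fintype V] (G : SimpleGraph V)

open Classical in
theorem numCliquesIn_univ_eq_card_cliqueFinset (m : ℕ) :
    numCliquesIn G univ m = #(G.cliqueFinset m) := by
  unfold numCliquesIn
  congr 1
  ext s
  simp [isNClique_iff, and_comm]

open Classical in
theorem numCliquesIn_neighbors_eq_card_filter_mem (x : V) (k : ℕ) :
    numCliquesIn G {y | G.Adj x y} k = #{t ∈ G.cliqueFinset (k + 1) | x ∈ t} := by
  unfold numCliquesIn
  have mem_nbrs {y : V} : y ∈ ({y | G.Adj x y} : Finset V) ↔ G.Adj x y := by simp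
  refine card_bij' (fun s _ => insert x s) (fun t _ => t.erase x) ?_ ?_ ?_ ?_ <;>
    simp only [mem_filter, mem_powerset, subset_univ, true_and, mem_cliqueFinset_iff,
      isNClique_iff]
  · rintro s ⟨hcard, hsub, hcl⟩
    have hadj : ∀ y ∈ s, G.Adj x y := fun y hy => mem_nbrs.1 (hsub hy)
    have hx : x ∉ s := fun h => G.irrefl (hadj x h)
    refine ⟨⟨coe_insert x s ▸ (isClique_insert_of_notMem hx).2 ⟨hcl, hadj⟩, ?_⟩,
      mem_insert_self x s⟩
    rw [card_insert_of_notMem hx, hcard]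
  · rintro t ⟨⟨hcl, hcard⟩, hx⟩
    refine ⟨by rw [card_erase_of_mem hx, hcard, Nat.add_sub_cancel], fun y hy => ?_,
      hcl.subset (coe_erase x t ▸ Set.sdiff_subset)⟩
    obtain ⟨hyx, hy⟩ := mem_erase.1 hy
    exact mem_nbrs.2 (hcl hx hy (Ne.symm hyx))
  · rintro s ⟨-, hsub, -⟩
    exact erase_insert fun h => G.irrefl (mem_nbrs.1 (hsub h))
  · rintro t ⟨-, hx⟩
    exact insert_erase hx

open Classical in
theorem sum_numCliquesIn_neighbors (k : ℕ) :
    ∑ x, numCliquesIn G {y | G.Adj x y} k = (k + 1) * numCliquesIn G univ (k + 1) := by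
  simp_rw [numCliquesIn_neighbors_eq_card_filter_mem, numCliquesIn_univ_eq_card_cliqueFinset,
    sum_card_filter_mem]
  rw [sum_congr rfl fun t ht => (mem_cliqueFinset_iff.1 ht).card_eq, sum_const, smul_eq_mul,
    mul_comm]

theorem numCliquesIn_univ_eq_zero {m : ℕ} (hm : Fintype.card V < m) :
    numCliquesIn G univ m = 0 := by
  classical
  rw [numCliquesIn_univ_eq_card_cliqueFinset, card_eq_zero, cliqueFinset_eq_empty_iff]
  exact cliqueFree_of_card_lt hm

end SimpleGraph

/-- Gauss–Bonnet–Chern for graphs: the total curvature equals the Euler characteristic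
`χ(G) = ∑_k (-1)^k v_k`, where `v_k` is the number of `K_{k+1}` subgraphs of `G`. -/
theorem gaussBonnet {V : Type*} [Fintype V] (G : SimpleGraph V) :
    ∑ x : V, curvature G x =
      ∑ k ∈ Finset.range (Fintype.card V),
        (-1 : ℚ) ^ k * (numCliquesIn G Finset.univ (k + 1) : ℚ) := by
  classical
  have sum_term (k : ℕ) : ∑ x, (-1 : ℚ) ^ k * numCliquesIn G {y | G.Adj x y} k / (k + 1) =
      (-1) ^ k * numCliquesIn G univ (k + 1) := by
    rw [← sum_div, ← mul_sum, ← Nat.cast_sum, G.sum_numCliquesIn_neighbors]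
    push_cast
    field_simp
  calc ∑ x, curvature G x
      = ∑ k ∈ range (Fintype.card V + 1), (-1 : ℚ) ^ k * numCliquesIn G univ (k + 1) := by
        simp only [curvature]
        rw [sum_comm]
        exact sum_congr rfl fun k _ => sum_term k
    _ = ∑ k ∈ range (Fintype.card V), (-1 : ℚ) ^ k * numCliquesIn G univ (k + 1) := by
        rw [sum_range_succ, G.numCliquesIn_univ_eq_zero (Nat.lt_succ_self _), Nat.cast_zero,
          mul_zero, add_zero]
end

section
/- For any finite simple graph G and any injective real-valued function f on the vertex set, the sum over all vertices of the Poincaré–Hopf index i_f(x) = 1 − χ(S⁻(x)) equals the Euler characteristic χ(G), where S⁻(x) is the induced subgraph on neighbors y of x with f(y) < f(x). -/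
-- The Euler characteristic `χ = ∑_k (-1)^k v_k` of the subgraph of `G` induced on `A`,
-- written as a sum over the nonempty cliques `s` contained in `A` of `(-1)^(dim s)`.
open Classical in
noncomputable def chi {V : Type*} [Fintype V] (G : SimpleGraph V) (A : Finset V) : ℤ :=
  ∑ s ∈ Finset.univ.powerset.filter
      (fun s : Finset V => s.Nonempty ∧ s ⊆ A ∧ G.IsClique ↑s),
    (-1 : ℤ) ^ (s.card + 1)

/-!
Every nonempty clique `s` of `G` has a unique vertex `x` at which `f` is maximal, and removing it
leaves a (possibly empty) clique of `S⁻(x)`; conversely adding `x` to any clique of `S⁻(x)` gives a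
clique with top vertex `x`. Grouping the cliques of `G` by their top vertex therefore writes `χ(G)`
as `∑ₓ ∑_{t clique of S⁻(x)} (-1)^|t|`, and the inner sum is `1 - χ(S⁻(x))`, the empty clique
contributing the `1`.
-/

open Finset

section

open Classical

variable {V : Type*} [Fintype V]

noncomputable def lowerNeighbors {α : Type*} [LinearOrder α] (G : SimpleGraph V) (f : V → α)
    (x : V) : Finset V :=
  univ.filter (fun y => G.Adj x y ∧ f y < f x)

noncomputable def cliquesIn (G : SimpleGraph V) (A : Finset V) : Finset (Finset V) :=
  univ.powerset.filter (fun t => t ⊆ A ∧ G.IsClique (t : Set V))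

theorem mem_cliquesIn {G : SimpleGraph V} {A t : Finset V} :
    t ∈ cliquesIn G A ↔ t ⊆ A ∧ G.IsClique (t : Set V) := by
  simp [cliquesIn]

theorem chi_eq_sum_erase_empty (G : SimpleGraph V) (A : Finset V) :
    chi G A = ∑ s ∈ (cliquesIn G A).erase ∅, (-1 : ℤ) ^ (s.card + 1) := by
  refine sum_congr (ext fun s => ?_) fun _ _ => rfl
  simp [cliquesIn, nonempty_iff_ne_empty]

theorem sum_cliquesIn_neg_one_pow (G : SimpleGraph V) (A : Finset V) :
    ∑ t ∈ cliquesIn G A, (-1 : ℤ) ^ t.card = 1 - chi G A := by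
  have hempty : ∅ ∈ cliquesIn G A := mem_cliquesIn.2 ⟨empty_subset A, by simp⟩
  rw [← add_sum_erase _ _ hempty, chi_eq_sum_erase_empty, sub_eq_add_neg, ← sum_neg_distrib]
  simp [pow_succ]

variable {α : Type*} [LinearOrder α] {G : SimpleGraph V} {f : V → α} {x : V} {t : Finset V}

theorem mem_lowerNeighbors {y : V} :
    y ∈ lowerNeighbors G f x ↔ G.Adj x y ∧ f y < f x := by
  simp [lowerNeighbors]

theorem notMem_of_subset_lowerNeighbors (ht : t ⊆ lowerNeighbors G f x) : x ∉ t :=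
  fun hx => G.loopless.irrefl x (mem_lowerNeighbors.1 (ht hx)).1

theorem le_of_mem_insert_of_subset_lowerNeighbors (ht : t ⊆ lowerNeighbors G f x) {y : V}
    (hy : y ∈ insert x t) : f y ≤ f x := by
  rcases mem_insert.1 hy with rfl | hyt
  · exact le_rfl
  · exact (mem_lowerNeighbors.1 (ht hyt)).2.le

theorem insert_mem_cliquesIn_univ (ht : t ∈ cliquesIn G (lowerNeighbors G f x)) :
    insert x t ∈ (cliquesIn G univ).erase ∅ := by
  obtain ⟨hsub, hclique⟩ := mem_cliquesIn.1 ht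
  refine mem_erase.2 ⟨insert_ne_empty x t, mem_cliquesIn.2 ⟨subset_univ _, ?_⟩⟩
  rw [coe_insert]
  exact hclique.insert fun y hy _ => (mem_lowerNeighbors.1 (hsub hy)).1

theorem erase_mem_cliquesIn_lowerNeighbors (hf : Function.Injective f) {s : Finset V}
    (hs : G.IsClique (s : Set V)) (hx : x ∈ s) (hmax : ∀ y ∈ s, f y ≤ f x) :
    s.erase x ∈ cliquesIn G (lowerNeighbors G f x) := by
  refine mem_cliquesIn.2 ⟨fun y hy => ?_, hs.subset (by simp)⟩
  obtain ⟨hyx, hys⟩ := mem_erase.1 hy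
  exact mem_lowerNeighbors.2
    ⟨hs hx hys (Ne.symm hyx), (hmax y hys).lt_of_ne fun h => hyx (hf h)⟩

/-- Grouping the nonempty cliques of `G` by the vertex at which `f` is maximal. -/
theorem sum_nonempty_cliques_eq_sum_lowerNeighbors {M : Type*} [AddCommMonoid M]
    (hf : Function.Injective f) (g : Finset V → M) :
    ∑ s ∈ (cliquesIn G univ).erase ∅, g s =
      ∑ x, ∑ t ∈ cliquesIn G (lowerNeighbors G f x), g (insert x t) := by
  rw [← sum_sigma univ (fun x => cliquesIn G (lowerNeighbors G f x)) fun p => g (insert p.1 p.2)]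
  symm
  refine sum_bij (fun p _ => insert p.1 p.2) (fun p hp => ?_) ?_ ?_ (fun _ _ => rfl)
  · exact insert_mem_cliquesIn_univ (mem_sigma.1 hp).2
  · rintro ⟨x, t⟩ hp ⟨x', t'⟩ hp' (heq : insert x t = insert x' t')
    have ht : t ⊆ lowerNeighbors G f x := (mem_cliquesIn.1 (mem_sigma.1 hp).2).1
    have ht' : t' ⊆ lowerNeighbors G f x' := (mem_cliquesIn.1 (mem_sigma.1 hp').2).1
    have hxx' : x = x' := hf <| le_antisymm
      (le_of_mem_insert_of_subset_lowerNeighbors ht' (heq ▸ mem_insert_self x t))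
      (le_of_mem_insert_of_subset_lowerNeighbors ht (heq ▸ mem_insert_self x' t'))
    subst hxx'
    obtain rfl : t = t' := by
      rw [← erase_insert (notMem_of_subset_lowerNeighbors ht), heq,
        erase_insert (notMem_of_subset_lowerNeighbors ht')]
    rfl
  · intro s hs
    obtain ⟨hne, hs⟩ := mem_erase.1 hs
    obtain ⟨x, hx, hmax⟩ := exists_max_image s f (nonempty_iff_ne_empty.2 hne)
    refine ⟨⟨x, s.erase x⟩, mem_sigma.2 ⟨mem_univ x, ?_⟩, insert_erase hx⟩
    exact erase_mem_cliquesIn_lowerNeighbors hf (mem_cliquesIn.1 hs).2 hx hmax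

end

-- Poincaré–Hopf for graphs: for any injective function `f : V → ℝ`, the sum of the
-- indices `i_f(x) = 1 - χ(S⁻(x))` over all vertices equals `χ(G)`, where `S⁻(x)` is the
-- subgraph induced on the neighbors `y` of `x` with `f y < f x`.
open Classical in
theorem poincareHopf {V : Type*} [Fintype V] (G : SimpleGraph V) (f : V → ℝ)
    (hf : Function.Injective f) :
    ∑ x : V, (1 - chi G (Finset.univ.filter (fun y => G.Adj x y ∧ f y < f x))) =
      chi G Finset.univ := by
  rw [chi_eq_sum_erase_empty, sum_nonempty_cliques_eq_sum_lowerNeighbors hf]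
  refine sum_congr rfl fun x _ => ?_
  rw [← lowerNeighbors, ← sum_cliquesIn_neg_one_pow]
  refine sum_congr rfl fun t ht => ?_
  rw [card_insert_of_notMem (notMem_of_subset_lowerNeighbors (mem_cliquesIn.1 ht).1)]
  ring
end

section
/- If a graph G' is obtained from a finite simple graph G by a cone (pyramid) extension over a subgraph whose Euler characteristic is 1 (e.g., any contractible subgraph), then χ(G') = χ(G). -/
-- The cone (pyramid) extension of `G` over the induced subgraph on the vertex set `W`:
-- a new vertex (`none`) is joined to every vertex of `W`, and the old graph is kept.
def coneExt {V : Type*} (G : SimpleGraph V) (W : Finset V) : SimpleGraph (Option V) :=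
  SimpleGraph.fromRel (fun a b =>
    match a, b with
    | some x, some y => G.Adj x y
    | none, some x => x ∈ W
    | _, _ => False)

open Finset

theorem Finset.sum_finset_option {α M : Type*} [Fintype α] [AddCommMonoid M]
    (f : Finset (Option α) → M) :
    ∑ t, f t = ∑ s : Finset α, f (s.map Function.Embedding.some) + ∑ s, f (insertNone s) := by
  classical
  rw [← sum_filter_not_add_sum_filter univ (fun t => none ∈ t)]
  congr 1
  · refine sum_nbij' eraseNone (map Function.Embedding.some) ?_ ?_ ?_ ?_ ?_ <;>
      simp_all [erase_eq_of_notMem]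
  · refine sum_nbij' eraseNone insertNone ?_ ?_ ?_ ?_ ?_ <;>
      simp_all [insert_eq_of_mem]

section coneExt

variable {V : Type*} (G : SimpleGraph V) (W : Finset V)

@[simp]
theorem coneExt_adj_some_some (x y : V) :
    (coneExt G W).Adj (some x) (some y) ↔ G.Adj x y := by
  simp only [coneExt, SimpleGraph.fromRel_adj, ne_eq, Option.some.injEq]
  exact ⟨fun ⟨_, h⟩ => h.elim id fun h => h.symm, fun h => ⟨h.ne, .inl h⟩⟩

@[simp]
theorem coneExt_adj_none_some (x : V) : (coneExt G W).Adj none (some x) ↔ x ∈ W := by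
  simp [coneExt]

theorem isClique_coneExt_map_some (s : Finset V) :
    (coneExt G W).IsClique (s.map Function.Embedding.some : Set (Option V)) ↔
      G.IsClique (s : Set V) := by
  rw [SimpleGraph.IsClique, coe_map, Function.Embedding.some_apply,
    (Option.some_injective V).injOn.pairwise_image]
  simp only [SimpleGraph.IsClique, Set.Pairwise, Function.onFun, coneExt_adj_some_some]

theorem isClique_coneExt_insertNone (s : Finset V) :
    (coneExt G W).IsClique (insertNone s : Set (Option V)) ↔ G.IsClique (s : Set V) ∧ s ⊆ W := by
  have hcoe : (insertNone s : Set (Option V)) =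
      insert none (s.map Function.Embedding.some : Set (Option V)) := by
    ext
    simp [insertNone]
  rw [hcoe, SimpleGraph.isClique_insert, isClique_coneExt_map_some]
  simp [subset_iff]

end coneExt

open Classical in
theorem chi_eq_one_sub_sum_cliques {V : Type*} [Fintype V] (G : SimpleGraph V) (A : Finset V) :
    chi G A = 1 - ∑ s with s ⊆ A ∧ G.IsClique (s : Set V), (-1 : ℤ) ^ #s := by
  have hnonempty : univ.filter (fun s : Finset V => s.Nonempty ∧ s ⊆ A ∧ G.IsClique (s : Set V)) =
      (univ.filter fun s : Finset V => s ⊆ A ∧ G.IsClique (s : Set V)).erase ∅ := by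
    ext s
    simp [nonempty_iff_ne_empty]
  have hempty : ∅ ∈ univ.filter fun s : Finset V => s ⊆ A ∧ G.IsClique (s : Set V) := by simp
  rw [chi, powerset_univ, hnonempty, ← add_sum_erase _ _ hempty]
  simp [pow_succ]

theorem chi_coneExt_univ {V : Type*} [Fintype V] (G : SimpleGraph V) (W : Finset V) :
    chi (coneExt G W) univ = chi G univ - chi G W + 1 := by
  classical
  simp only [chi_eq_one_sub_sum_cliques, subset_univ, true_and, sum_filter]
  rw [sum_finset_option]
  simp only [isClique_coneExt_map_some, isClique_coneExt_insertNone, card_map, card_insertNone,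
    pow_succ, mul_neg_one, ← sum_filter, sum_neg_distrib, and_comm (a := G.IsClique _)]
  ring

/-- If `G'` is obtained from `G` by a cone extension over an induced subgraph with
Euler characteristic `1`, then `χ(G') = χ(G)`. -/
theorem chi_coneExt {V : Type*} [Fintype V] (G : SimpleGraph V) (W : Finset V)
    (hW : chi G W = 1) :
    chi (coneExt G W) Finset.univ = chi G Finset.univ := by
  rw [chi_coneExt_univ, hW]
  ring
end

section
/- Every Ivashchenko-contractible finite simple graph has Euler characteristic 1. -/
-- Ivashchenko contractibility of the induced subgraph of `G` on the vertex set `A`: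
-- a single vertex is contractible; adding a new vertex `z` whose neighbors inside `A`
-- form a contractible set `W` (a cone extension) preserves contractibility; and removing
-- a vertex `z` whose unit sphere is contractible preserves contractibility.
open Classical in
inductive IsContractible {V : Type*} (G : SimpleGraph V) : Finset V → Prop
  | single (x : V) : IsContractible G {x}
  | cone (A W : Finset V) (z : V) (hW : W ⊆ A) (hz : z ∉ A)
      (hadj : ∀ y ∈ A, (G.Adj z y ↔ y ∈ W))
      (hA : IsContractible G A) (hWc : IsContractible G W) :
      IsContractible G (insert z A)
  | remove (A : Finset V) (z : V) (hz : z ∈ A)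
      (hs : IsContractible G ((A.erase z).filter (fun y => G.Adj z y)))
      (hA : IsContractible G A) : IsContractible G (A.erase z)

/-!
Let `χ̃ = χ - 1` be the signed count of all cliques, the empty one included. A clique of
`insert z B` either avoids `z`, or is `insert z t` for a clique `t` of the unit sphere `S(z)` of
`z` in `B`, counted with the opposite sign; hence `χ̃ (B + z) = χ̃ B - χ̃ S(z)`. Taking `B = ∅`
shows that `χ̃` vanishes on a point, and the same formula shows that cone extensions and removals
of vertices with contractible unit sphere preserve `χ̃ = 0`.
-/

open Finset

open Classical in
noncomputable def reducedChi {V : Type*} (G : SimpleGraph V) (A : Finset V) : ℤ :=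
  ∑ s ∈ A.powerset.filter (fun s : Finset V => G.IsClique (s : Set V)), (-1 : ℤ) ^ (#s + 1)

open Classical

theorem SimpleGraph.isClique_insert_iff_subset_filter_adj {V : Type*} (G : SimpleGraph V)
    {B t : Finset V} {z : V} (hz : z ∉ B) (htB : t ⊆ B) :
    G.IsClique (insert z t : Finset V) ↔ G.IsClique (t : Set V) ∧ t ⊆ B.filter (G.Adj z) := by
  rw [coe_insert, G.isClique_insert_of_notMem (fun h => hz (htB h))]
  simp only [subset_iff, mem_filter, mem_coe]
  exact and_congr_right fun _ => forall₂_congr fun y hy => (and_iff_right (htB hy)).symm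

section

variable {V : Type*} (G : SimpleGraph V)

theorem chi_eq_reducedChi_add_one [Fintype V] (A : Finset V) :
    chi G A = reducedChi G A + 1 := by
  have hcliques : univ.powerset.filter
      (fun s : Finset V => s.Nonempty ∧ s ⊆ A ∧ G.IsClique (s : Set V)) =
      (A.powerset.filter (fun s : Finset V => G.IsClique (s : Set V))).erase ∅ := by
    ext s
    simp [nonempty_iff_ne_empty]
  rw [chi, reducedChi, hcliques, sum_erase_eq_sub (by simp)]
  simp

theorem reducedChi_insert {B : Finset V} {z : V} (hz : z ∉ B) :
    reducedChi G (insert z B) = reducedChi G B - reducedChi G (B.filter (G.Adj z)) := by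
  simp only [reducedChi, sum_filter]
  rw [sum_powerset_insert hz, sub_eq_add_neg, ← sum_neg_distrib]
  congr 1
  refine (sum_subset (powerset_mono.2 (filter_subset _ B)) fun t htB htW => ?_).symm.trans
    (sum_congr rfl fun t htW => ?_)
  · rw [mem_powerset] at htB htW
    rw [if_neg (by rw [G.isClique_insert_iff_subset_filter_adj hz htB]; tauto)]
  · rw [mem_powerset] at htW
    have htB : t ⊆ B := htW.trans (filter_subset _ B)
    rw [if_congr (G.isClique_insert_iff_subset_filter_adj hz htB) rfl rfl,
      card_insert_of_notMem (fun h => hz (htB h))]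
    simp only [htW, and_true]
    split_ifs <;> ring

theorem reducedChi_singleton (x : V) : reducedChi G {x} = 0 := by
  rw [← insert_empty, reducedChi_insert G (notMem_empty x), filter_empty, sub_self]

end

/-- Every Ivashchenko-contractible graph has Euler characteristic `1`. -/
theorem chi_of_contractible {V : Type*} [Fintype V] (G : SimpleGraph V) (A : Finset V)
    (h : IsContractible G A) : chi G A = 1 := by
  rw [chi_eq_reducedChi_add_one, add_eq_right]
  induction h with
  | single x => exact reducedChi_singleton G x
  | cone A W z hW hz hadj _ _ ihA ihW =>
    have hsphere : A.filter (G.Adj z) = W := by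
      ext y
      rw [mem_filter]
      exact ⟨fun hy => (hadj y hy.1).1 hy.2, fun hy => ⟨hW hy, (hadj y (hW hy)).2 hy⟩⟩
    rw [reducedChi_insert G hz, hsphere, ihA, ihW, sub_self]
  | remove A z hz _ _ ihs ihA =>
    have hinsert := reducedChi_insert G (notMem_erase z A)
    rw [insert_erase hz, ihA, ihs, sub_zero] at hinsert
    exact hinsert.symm
end

section
/- A finite simple graph is triangle-free if and only if every unit sphere S(x) is edgeless; consequently a graph with at least one edge is triangle-free iff its inductive dimension equals the fraction of non-isolated vertices, i.e., dim(G) = |{x : deg(x) ≥ 1}|/|V|. -/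
/-!
Write `dim A = |A|⁻¹ ∑_{x ∈ A} (1 + dim S(x))`. By induction every nonempty vertex set has
`dim ≥ 0`, so each summand is at least `[S(x) ≠ ∅]`, and it equals `[S(x) ≠ ∅]` exactly when
`S(x)` is empty or has dimension `0`, i.e. when `S(x)` is edgeless. Averaging, `dim A` is at least
the fraction of non-isolated vertices, with equality iff no unit sphere contains an edge, which is
triangle-freeness.
-/

-- Inductive dimension of the subgraph of `G` induced on the finite vertex set `A`:
-- `dim ∅ = -1`, `dim A = 1 + (1/|A|) ∑_{x ∈ A} dim (S(x))`, where `S(x)` is the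
-- unit sphere of `x` inside `A` (the neighbors of `x` lying in `A`).
open Classical in
noncomputable def gdim {V : Type*} (G : SimpleGraph V) (A : Finset V) : ℚ :=
  if A = ∅ then -1
  else 1 + (A.card : ℚ)⁻¹ * ∑ x ∈ A.attach, gdim G (A.filter (fun y => G.Adj x.1 y))
  termination_by A.card
  decreasing_by
    exact Finset.card_lt_card
      ((Finset.ssubset_iff_of_subset (Finset.filter_subset _ _)).mpr ⟨x.1, x.2, by simp⟩)

namespace SimpleGraph

theorem cliqueFree_three_iff_forall {V : Type*} (G : SimpleGraph V) :
    G.CliqueFree 3 ↔ ∀ x y z : V, G.Adj x y → G.Adj x z → ¬ G.Adj y z := by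
  classical
  refine ⟨fun h x y z hxy hxz hyz => h {x, y, z} (is3Clique_triple_iff.mpr ⟨hxy, hxz, hyz⟩), ?_⟩
  intro h s hs
  obtain ⟨x, y, z, hxy, hxz, hyz, -⟩ := is3Clique_iff.mp hs
  exact h x y z hxy hxz hyz

open Finset in
theorem card_filter_adj_lt {V : Type*} (G : SimpleGraph V) [DecidableRel G.Adj] {A : Finset V}
    {x : V} (hx : x ∈ A) : #(A.filter (G.Adj x)) < #A :=
  card_lt_card ((ssubset_iff_of_subset (filter_subset _ _)).mpr ⟨x, hx, by simp⟩)

end SimpleGraph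

section gdim

open Finset Classical

variable {V : Type*} (G : SimpleGraph V) {A : Finset V}

theorem gdim_empty : gdim G ∅ = -1 := by
  rw [gdim, if_pos rfl]

theorem gdim_eq_average (hA : A.Nonempty) :
    gdim G A = (#A : ℚ)⁻¹ * ∑ x ∈ A, (1 + gdim G (A.filter (G.Adj x))) := by
  have hcard : (#A : ℚ) ≠ 0 := by exact_mod_cast hA.card_pos.ne'
  rw [gdim, if_neg hA.ne_empty, sum_attach A (fun x => gdim G (A.filter (G.Adj x))),
    sum_add_distrib, sum_const, nsmul_one, mul_add, inv_mul_cancel₀ hcard]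

theorem neg_one_le_gdim (A : Finset V) : -1 ≤ gdim G A := by
  rcases A.eq_empty_or_nonempty with rfl | hA
  · rw [gdim_empty]
  · rw [gdim_eq_average G hA]
    have hsum : 0 ≤ ∑ x ∈ A, (1 + gdim G (A.filter (G.Adj x))) :=
      sum_nonneg fun x _ => by linarith [neg_one_le_gdim (A.filter (G.Adj x))]
    linarith [mul_nonneg (by positivity : (0 : ℚ) ≤ (#A : ℚ)⁻¹) hsum]
termination_by #A
decreasing_by exact G.card_filter_adj_lt ‹_›

theorem gdim_nonneg (hA : A.Nonempty) : 0 ≤ gdim G A := by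
  rw [gdim_eq_average G hA]
  exact mul_nonneg (by positivity)
    (sum_nonneg fun x _ => by linarith [neg_one_le_gdim G (A.filter (G.Adj x))])

theorem gdim_pos_of_adj {x y : V} (hx : x ∈ A) (hy : y ∈ A) (hxy : G.Adj x y) :
    0 < gdim G A := by
  have hA : A.Nonempty := ⟨x, hx⟩
  have hSx : (A.filter (G.Adj x)).Nonempty := ⟨y, mem_filter.mpr ⟨hy, hxy⟩⟩
  rw [gdim_eq_average G hA]
  refine mul_pos (by simpa using hA.card_pos) (sum_pos' (fun z _ => ?_) ⟨x, hx, ?_⟩)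
  · linarith [neg_one_le_gdim G (A.filter (G.Adj z))]
  · linarith [gdim_nonneg G hSx]

theorem gdim_eq_zero_of_forall_not_adj (hA : A.Nonempty)
    (h : ∀ x ∈ A, ∀ y ∈ A, ¬ G.Adj x y) : gdim G A = 0 := by
  have hS : ∀ x ∈ A, A.filter (G.Adj x) = ∅ := fun x hx =>
    filter_eq_empty_iff.mpr fun y hy => h x hx y hy
  rw [gdim_eq_average G hA, sum_eq_zero fun x hx => by rw [hS x hx, gdim_empty]; norm_num,
    mul_zero]

theorem gdim_eq_zero_iff (hA : A.Nonempty) :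
    gdim G A = 0 ↔ ∀ x ∈ A, ∀ y ∈ A, ¬ G.Adj x y :=
  ⟨fun h _ hx _ hy hxy => (gdim_pos_of_adj G hx hy hxy).ne' h,
    gdim_eq_zero_of_forall_not_adj G hA⟩

theorem ite_nonempty_le_one_add_gdim (B : Finset V) :
    (if B.Nonempty then 1 else 0 : ℚ) ≤ 1 + gdim G B := by
  split_ifs with hB
  · linarith [gdim_nonneg G hB]
  · linarith [neg_one_le_gdim G B]

theorem one_add_gdim_eq_ite_nonempty_iff (B : Finset V) :
    1 + gdim G B = (if B.Nonempty then 1 else 0 : ℚ) ↔ ∀ x ∈ B, ∀ y ∈ B, ¬ G.Adj x y := by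
  rcases B.eq_empty_or_nonempty with rfl | hB
  · simp [gdim_empty]
  · rw [if_pos hB, add_eq_left, gdim_eq_zero_iff G hB]

theorem gdim_eq_card_div_card_iff (hA : A.Nonempty) :
    gdim G A = #(A.filter fun x => (A.filter (G.Adj x)).Nonempty) / #A ↔
      ∀ x ∈ A, ∀ y ∈ A, ∀ z ∈ A, G.Adj x y → G.Adj x z → ¬ G.Adj y z := by
  have hcard : (#A : ℚ)⁻¹ ≠ 0 := by simpa using hA.ne_empty
  rw [gdim_eq_average G hA, div_eq_inv_mul, natCast_card_filter, mul_right_inj' hcard, eq_comm,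
    sum_eq_sum_iff_of_le fun x _ => ite_nonempty_le_one_add_gdim G _]
  refine forall₂_congr fun x _ => ?_
  rw [eq_comm, one_add_gdim_eq_ite_nonempty_iff]
  simp only [mem_filter, and_imp]
  exact ⟨fun h y hy z hz hxy hxz => h y hy hxy z hz hxz,
    fun h y hy hxy z hz hxz => h y hy z hz hxy hxz⟩

end gdim

open Classical in
theorem triangleFree_dim {V : Type*} [Fintype V] (G : SimpleGraph V) :
    (G.CliqueFree 3 ↔ ∀ x y z : V, G.Adj x y → G.Adj x z → ¬ G.Adj y z) ∧
    ((∃ x y : V, G.Adj x y) →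
      (G.CliqueFree 3 ↔
        gdim G Finset.univ =
          ((Finset.univ.filter (fun x : V => ∃ y, G.Adj x y)).card : ℚ) /
            (Fintype.card V : ℚ))) := by
  refine ⟨G.cliqueFree_three_iff_forall, fun ⟨x, _, _⟩ => ?_⟩
  have hdim := gdim_eq_card_div_card_iff G (Finset.univ_nonempty_iff.mpr ⟨x⟩)
  simp only [Finset.mem_univ, true_implies, true_and, Finset.filter_nonempty_iff,
    Finset.card_univ] at hdim
  rw [G.cliqueFree_three_iff_forall, hdim]
end
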